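/- Let F be a field of characteristic 2, let q be a totally singular quadratic form over F on a finite-dimensional F-vector space V which is not a zero form (i.e. q(x) ≠ 0 for some x), let L/F be a finite separable field extension, and let a ∈ F. If there exists a nonzero vector z in L ⊗_F V with q_L(z) = a, then there exists a nonzero vector y ∈ V with q(y) = a. -/

import Mathlib

/-!
Choose an `F`-basis `b` of `L` with `b i₀ = 1` and write `z = ∑ bᵢ ⊗ yᵢ`. Total singularity makes
`Q` additive, so `Q z = ∑ q(yᵢ) bᵢ²`. Since `L/F` is separable of characteristic 2, the squares
`bᵢ²` are again `F`-linearly independent; comparing with `a = a ⬝ b_{i₀}²` gives `q(y_{i₀}) = a` and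
`q(yᵢ) = 0` for `i ≠ i₀`. As `z ≠ 0`, some `yᵢ` is nonzero, and one of them has `q(yᵢ) = a`.
-/

open scoped TensorProduct

/-- `Q` is the scalar extension of the quadratic form `q` to `L`: it satisfies
`Q (c ⊗ x) = c² ⬝ q x` and its polar form is the base change of the polar form of `q`
(a bilinear form is determined by its values on pure tensors). -/
def IsScalarExt (F : Type*) {L : Type*} [Field F] [Field L] [Algebra F L]
    {V : Type*} [AddCommGroup V] [Module F V]
    (q : QuadraticForm F V) (Q : QuadraticForm L (L ⊗[F] V)) : Prop :=
  (∀ (c : L) (x : V), Q (c ⊗ₜ[F] x) = c ^ 2 * algebraMap F L (q x)) ∧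
  ∀ (c d : L) (x y : V),
    QuadraticMap.polar (⇑Q) (c ⊗ₜ[F] x) (d ⊗ₜ[F] y) =
      c * d * algebraMap F L (QuadraticMap.polar (⇑q) x y)

open Module TensorProduct

theorem Module.Basis.exists_apply_eq (K : Type*) {V : Type*} [DivisionRing K] [AddCommGroup V]
    [Module K V] {v : V} (hv : v ≠ 0) : ∃ (s : Set V) (b : Basis s K V) (i : s), b i = v := by
  have hs : LinearIndepOn K id {v} := LinearIndepOn.singleton hv
  exact ⟨_, Basis.extend hs, ⟨v, hs.subset_extend _ rfl⟩, Basis.extend_apply_self hs _⟩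

theorem Finsupp.exists_apply_ne_zero_of_mapRange_eq_single {ι M N : Type*} [Zero M] [Zero N]
    {g : M → N} {hg : g 0 = 0} {f : ι →₀ M} (hf : f ≠ 0) {i₀ : ι} {a : N}
    (h : f.mapRange g hg = Finsupp.single i₀ a) : ∃ i, f i ≠ 0 ∧ g (f i) = a := by
  have hcoord (i : ι) : g (f i) = Finsupp.single i₀ a i := by
    rw [← h, Finsupp.mapRange_apply]
  by_cases ha : a = 0
  · obtain ⟨i, hi⟩ := Finsupp.ne_iff.mp hf
    exact ⟨i, hi, by rw [hcoord, ha, Finsupp.single_zero, Finsupp.zero_apply]⟩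
  · have hi₀ : g (f i₀) = a := by rw [hcoord, Finsupp.single_eq_same]
    exact ⟨i₀, fun h0 => ha (by rw [← hi₀, h0, hg]), hi₀⟩

namespace QuadraticMap

variable {R M N : Type*} [CommRing R] [AddCommGroup M] [AddCommGroup N] [Module R M]
  [Module R N] (Q : QuadraticMap R M N)

theorem map_add_of_polar_eq_zero (hQ : ∀ x y, polar Q x y = 0) (x y : M) :
    Q (x + y) = Q x + Q y := by
  rw [← sub_eq_zero, ← sub_sub]
  exact hQ x y

theorem map_finsuppSum_of_polar_eq_zero (hQ : ∀ x y, polar Q x y = 0) {ι α : Type*} [Zero α]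
    (f : ι →₀ α) (g : ι → α → M) : Q (f.sum g) = f.sum fun i a => Q (g i a) :=
  _root_.map_finsuppSum (AddMonoidHom.mk' Q (map_add_of_polar_eq_zero Q hQ)) f g

end QuadraticMap

namespace IsScalarExt

variable {F L V : Type*} [Field F] [Field L] [Algebra F L] [AddCommGroup V] [Module F V]
  {q : QuadraticForm F V} {Q : QuadraticForm L (L ⊗[F] V)}

theorem polar_eq_zero (hQ : IsScalarExt F q Q) (hq : ∀ x y, QuadraticMap.polar q x y = 0)
    (u w : L ⊗[F] V) : QuadraticMap.polar Q u w = 0 := by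
  induction u using TensorProduct.induction_on with
  | zero => exact QuadraticMap.polar_zero_left Q w
  | add u₁ u₂ h₁ h₂ => rw [QuadraticMap.polar_add_left, h₁, h₂, add_zero]
  | tmul c x =>
    induction w using TensorProduct.induction_on with
    | zero => exact QuadraticMap.polar_zero_right Q _
    | add w₁ w₂ h₁ h₂ => rw [QuadraticMap.polar_add_right, h₁, h₂, add_zero]
    | tmul d y => rw [hQ.2, hq, map_zero, mul_zero]

theorem map_equivFinsuppOfBasisLeft_symm (hQ : IsScalarExt F q Q)
    (hq : ∀ x y, QuadraticMap.polar q x y = 0) {ι : Type*} [DecidableEq ι] (b : Basis ι F L)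
    (y : ι →₀ V) :
    Q ((equivFinsuppOfBasisLeft b).symm y) =
      Finsupp.linearCombination F (fun i => b i ^ 2) (y.mapRange q q.map_zero) := by
  rw [equivFinsuppOfBasisLeft_symm_apply,
    Q.map_finsuppSum_of_polar_eq_zero (hQ.polar_eq_zero hq), Finsupp.linearCombination_apply,
    Finsupp.sum_mapRange_index fun i => zero_smul F (b i ^ 2)]
  refine Finsupp.sum_congr fun i _ => ?_
  rw [hQ.1, Algebra.smul_def, mul_comm]

end IsScalarExt

theorem stmt_4_general {F L : Type*} [Field F] [CharP F 2] [Field L] [Algebra F L]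
    [Algebra.IsSeparable F L]
    {V : Type*} [AddCommGroup V] [Module F V]
    (q : QuadraticForm F V)
    (hts : ∀ x y : V, QuadraticMap.polar (⇑q) x y = 0)
    (Q : QuadraticForm L (L ⊗[F] V)) (hQ : IsScalarExt F q Q)
    (a : F) (h : ∃ z : L ⊗[F] V, z ≠ 0 ∧ Q z = algebraMap F L a) :
    ∃ y : V, y ≠ 0 ∧ q y = a := by
  classical
  obtain ⟨z, hz0, hzQ⟩ := h
  obtain ⟨s, b, i₀, hb⟩ := Basis.exists_apply_eq F (one_ne_zero : (1 : L) ≠ 0)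
  set y := equivFinsuppOfBasisLeft b z with hy
  have hy0 : y ≠ 0 := (LinearEquiv.map_ne_zero_iff _).mpr hz0
  have hsq : LinearIndependent F fun i => b i ^ 2 := by
    simpa using b.linearIndependent.map_pow_expChar_pow_of_isSeparable 2 1
  have hcoord : y.mapRange q q.map_zero = Finsupp.single i₀ a := by
    refine hsq.finsuppLinearCombination_injective ?_
    rw [← hQ.map_equivFinsuppOfBasisLeft_symm hts, hy, LinearEquiv.symm_apply_apply, hzQ,
      Finsupp.linearCombination_single, hb, one_pow, Algebra.algebraMap_eq_smul_one]
  obtain ⟨i, hi, hqi⟩ := Finsupp.exists_apply_ne_zero_of_mapRange_eq_single hy0 hcoord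
  exact ⟨y i, hi, hqi⟩

/-- values in the base field of a nonzero totally singular quadratic form
descend from finite separable extensions. -/
theorem stmt_4 {F L : Type*} [Field F] [CharP F 2] [Field L] [Algebra F L]
    [FiniteDimensional F L] [Algebra.IsSeparable F L]
    {V : Type*} [AddCommGroup V] [Module F V] [FiniteDimensional F V]
    (q : QuadraticForm F V)
    (hts : ∀ x y : V, QuadraticMap.polar (⇑q) x y = 0)
    (hnz : ∃ x : V, q x ≠ 0)
    (Q : QuadraticForm L (L ⊗[F] V)) (hQ : IsScalarExt F q Q)
    (a : F) (h : ∃ z : L ⊗[F] V, z ≠ 0 ∧ Q z = algebraMap F L a) :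
    ∃ y : V, y ≠ 0 ∧ q y = a :=
  stmt_4_general q hts Q hQ a h
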